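/- Periodic-f^l shift equivariance of an encoder-decoder network without skip connections: let f ≥ 1, l ≥ 0, let h₀, …, h_{2l} : ℤ → ℝ be finitely supported convolution kernels and p₁, …, p_l : ℤ → ℝ be finitely supported up-convolution kernels. Define the convolution operators C_i(g)(x) = ∑_{m ∈ ℤ} g(m)·h_i(m − x), the pooling operator M(g)(x) = max { g(f·x + i) | i ∈ {0, …, f − 1} }, and the up-convolution operators UP_j(g)(x) = ∑_{m ∈ ℤ} g(m)·p_j(x − f·m). Let U be the composition applying, in order: C₀; then M and C_i for i = 1, …, l; then UP_j and C_{l+j} for j = 1, …, l. Then for all g : ℤ → ℝ and all t ∈ ℤ, U(T_{f^l·t}(g)) = T_{f^l·t}(U(g)). -/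

import Mathlib

/-- The shift operator: `T t g x = g (x - t)`. -/
noncomputable def T (t : ℤ) (g : ℤ → ℝ) : ℤ → ℝ := fun x => g (x - t)

/-- The (valid) convolution operator with kernel `h`:
`C g x = ∑_{m ∈ ℤ} g m * h (m - x)`. -/
noncomputable def convOp (h : ℤ → ℝ) (g : ℤ → ℝ) : ℤ → ℝ :=
  fun x => ∑ᶠ m : ℤ, g m * h (m - x)

/-- Max pooling with kernel size and stride `f`:
`M g x = max { g (f·x + i) | i ∈ {0, …, f − 1} }`. -/
noncomputable def poolOp (f : ℕ) (hf : 1 ≤ f) (g : ℤ → ℝ) : ℤ → ℝ :=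
  fun x => (Finset.range f).sup' (Finset.nonempty_range_iff.mpr (by omega))
    (fun i => g ((f : ℤ) * x + (i : ℤ)))

/-- The up-convolution operator with kernel `p` and stride `f`:
`UP g x = ∑_{m ∈ ℤ} g m * p (x - f·m)`. -/
noncomputable def upConvOp (f : ℕ) (p : ℤ → ℝ) (g : ℤ → ℝ) : ℤ → ℝ :=
  fun x => ∑ᶠ m : ℤ, g m * p (x - (f : ℤ) * m)

/-- The encoder path after `i` levels: apply `C₀`, then `M` and `C_k` for
`k = 1, …, i`. -/
noncomputable def encPath (f : ℕ) (hf : 1 ≤ f) (h : ℕ → ℤ → ℝ) :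
    ℕ → (ℤ → ℝ) → ℤ → ℝ
  | 0 => convOp (h 0)
  | (i + 1) => fun g => convOp (h (i + 1)) (poolOp f hf (encPath f hf h i g))

/-- The full network after `j` decoder levels: the encoder path with `l`
levels, followed by `UP_k` and `C_{l+k}` for `k = 1, …, j`. -/
noncomputable def decPath (f : ℕ) (hf : 1 ≤ f) (l : ℕ) (h p : ℕ → ℤ → ℝ) :
    ℕ → (ℤ → ℝ) → ℤ → ℝ
  | 0 => encPath f hf h l
  | (j + 1) => fun g =>
      convOp (h (l + (j + 1))) (upConvOp f (p (j + 1)) (decPath f hf l h p j g))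

/-! Convolutions commute with every shift, pooling with stride `f` turns a shift by `f * s`
into a shift by `s`, and an up-convolution with stride `f` turns a shift by `s` into one by
`f * s`. So a shift by `f ^ l * t` leaves the `l` pooling layers of the encoder as a shift by
`t`, and the `l` up-convolutions of the decoder turn it back into a shift by `f ^ l * t`. -/

lemma convOp_shift (h g : ℤ → ℝ) (s : ℤ) : convOp h (T s g) = T s (convOp h g) := by
  funext x
  simp only [convOp, T]
  rw [← finsum_comp_equiv (Equiv.addRight s)]
  congr! 2 with m
  simp only [Equiv.coe_addRight, add_sub_cancel_right]
  ring_nf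

lemma poolOp_shift (f : ℕ) (hf : 1 ≤ f) (g : ℤ → ℝ) (s : ℤ) :
    poolOp f hf (T (f * s) g) = T s (poolOp f hf g) := by
  funext x
  refine Finset.sup'_congr _ rfl fun i _ => ?_
  simp only [T]
  ring_nf

lemma upConvOp_shift (f : ℕ) (p g : ℤ → ℝ) (s : ℤ) :
    upConvOp f p (T s g) = T (f * s) (upConvOp f p g) := by
  funext x
  simp only [upConvOp, T]
  rw [← finsum_comp_equiv (Equiv.addRight s)]
  congr! 2 with m
  simp only [Equiv.coe_addRight, add_sub_cancel_right]
  ring_nf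

lemma encPath_shift (f : ℕ) (hf : 1 ≤ f) (h : ℕ → ℤ → ℝ) (i : ℕ) (g : ℤ → ℝ) (s : ℤ) :
    encPath f hf h i (T ((f : ℤ) ^ i * s) g) = T s (encPath f hf h i g) := by
  induction i generalizing s with
  | zero =>
    rw [pow_zero, one_mul]
    exact convOp_shift (h 0) g s
  | succ i ih =>
    simp only [encPath]
    rw [pow_succ, mul_assoc, ih, poolOp_shift, convOp_shift]

lemma decPath_shift (f : ℕ) (hf : 1 ≤ f) (l : ℕ) (h p : ℕ → ℤ → ℝ) (j : ℕ)
    (g : ℤ → ℝ) (s : ℤ) :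
    decPath f hf l h p j (T ((f : ℤ) ^ l * s) g)
      = T ((f : ℤ) ^ j * s) (decPath f hf l h p j g) := by
  induction j with
  | zero =>
    rw [pow_zero, one_mul]
    exact encPath_shift f hf h l g s
  | succ j ih =>
    simp only [decPath]
    rw [ih, upConvOp_shift, convOp_shift, pow_succ', mul_assoc]

theorem stmt_19_general (f : ℕ) (hf : 1 ≤ f) (l : ℕ)
    (h : ℕ → ℤ → ℝ)
    (p : ℕ → ℤ → ℝ)
    (g : ℤ → ℝ) (t : ℤ) :
    decPath f hf l h p l (T ((f : ℤ) ^ l * t) g)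
      = T ((f : ℤ) ^ l * t) (decPath f hf l h p l g) :=
  decPath_shift f hf l h p l g t

/-- Periodic-`f^l` shift equivariance of an encoder-decoder network without
skip connections: the network `U` applying, in order, `C₀`; then `M`, `C_i`
for `i = 1, …, l`; then `UP_j`, `C_{l+j}` for `j = 1, …, l`, is shift
equivariant to shifts `f^l * t`. -/
theorem stmt_19 (f : ℕ) (hf : 1 ≤ f) (l : ℕ)
    (h : ℕ → ℤ → ℝ) (hh : ∀ i, (Function.support (h i)).Finite)
    (p : ℕ → ℤ → ℝ) (hp : ∀ j, (Function.support (p j)).Finite)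
    (g : ℤ → ℝ) (t : ℤ) :
    decPath f hf l h p l (T ((f : ℤ) ^ l * t) g)
      = T ((f : ℤ) ^ l * t) (decPath f hf l h p l g) :=
  stmt_19_general f hf l h p g t
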